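/- arXiv:1609.03938 — 5 statements merged into one kernel-verified Lean document; each statement's English description precedes it below -/
import Mathlib

section
/- Let S be a family of pieces and K : [0,1] → subsets of C an S-continuous knife function, meaning: for every ε > 0 there is δ > 0 such that for all t, t' with |t'−t| < δ, every S-piece s' ⊆ K(t') contains an S-piece s ⊆ K(t) with s ⊆ s' and Lebesgue(s' \ s) < ε, and symmetrically for the complements C \ K(t). Then for every finite measure V absolutely continuous with respect to Lebesgue measure, the functions t ↦ V^S(K(t)) and t ↦ V^S(C \ K(t)) are uniformly continuous. -/
/-!
Absolute continuity of the finite measure `V` with respect to Lebesgue measure holds in the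
uniform `ε`-`δ` form (by Borel–Cantelli). Hence, if every piece inside `K t'` has a predecessor
inside `K t` missing only a set of small Lebesgue measure, that missing set also has small
`V`-measure, so the supremum `V^S(K t')` exceeds `V^S(K t)` by at most `ε'`; likewise for the
complements `C \ K t`.
-/

open MeasureTheory
open scoped ENNReal

/-- `sVal V S X` is the value `V^S(X)`: the supremum of `V s` over usable pieces `s ∈ S`
contained in `X`. -/
noncomputable def sVal {α : Type*} [MeasurableSpace α]
    (V : Measure α) (S : Set (Set α)) (X : Set α) : ℝ≥0∞ :=
  ⨆ (s : Set α) (_ : s ∈ S ∧ s ⊆ X), V s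

open Filter

namespace MeasureTheory

variable {α : Type*} [MeasurableSpace α]

lemma le_measure_limsup_atTop {V : Measure α} [IsFiniteMeasure V] {B : ℕ → Set α}
    (hB : ∀ n, MeasurableSet (B n)) {ε : ℝ≥0∞} (hε : ∀ n, ε ≤ V (B n)) :
    ε ≤ V (limsup B atTop) := by
  have hanti : Antitone fun n => ⋃ i ≥ n, B i := fun m n hmn =>
    Set.biUnion_mono (fun i hi => le_trans hmn hi) fun _ _ => le_rfl
  rw [limsup_eq_iInf_iSup_of_nat]
  simp only [Set.iInf_eq_iInter, Set.iSup_eq_iUnion]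
  rw [hanti.measure_iInter (fun n => (MeasurableSet.biUnion (Set.to_countable _)
    fun i _ => hB i).nullMeasurableSet) ⟨0, measure_ne_top V _⟩]
  exact le_iInf fun n => (hε n).trans (measure_mono (Set.subset_biUnion_of_mem (le_refl n)))

theorem Measure.AbsolutelyContinuous.exists_pos_forall_measure_lt {μ V : Measure α}
    [IsFiniteMeasure V] (hac : V ≪ μ) {ε : ℝ≥0∞} (hε : 0 < ε) :
    ∃ δ > 0, ∀ A, μ A < δ → V A < ε := by
  by_contra! h
  obtain ⟨δ, hδpos, hδsum⟩ := ENNReal.exists_pos_sum_of_countable one_ne_zero ℕ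
  choose A hAμ hAV using fun n => h (δ n) (ENNReal.coe_pos.2 (hδpos n))
  set B := fun n => toMeasurable μ (A n)
  have hsum : ∑' n, μ (B n) ≠ ∞ := by
    simp only [B, measure_toMeasurable]
    exact ne_top_of_le_ne_top (hδsum.trans ENNReal.one_lt_top).ne
      (ENNReal.tsum_le_tsum fun n => (hAμ n).le)
  have hnull : V (limsup B atTop) = 0 := hac (measure_limsup_atTop_eq_zero hsum)
  have hlarge : ε ≤ V (limsup B atTop) :=
    le_measure_limsup_atTop (fun n => measurableSet_toMeasurable μ (A n))
      fun n => (hAV n).trans (measure_mono (subset_toMeasurable μ (A n)))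
  exact hε.ne' (le_antisymm (hnull ▸ hlarge) bot_le)

end MeasureTheory

section

variable {α : Type*} [MeasurableSpace α] {V : Measure α} {S : Set (Set α)}

lemma le_sVal {X s : Set α} (hs : s ∈ S) (hsX : s ⊆ X) : V s ≤ sVal V S X :=
  le_iSup₂_of_le s ⟨hs, hsX⟩ le_rfl

lemma sVal_le_sVal_add_of_forall_exists_measure_diff_le {X Y : Set α} {ε : ℝ≥0∞}
    (h : ∀ s' ∈ S, s' ⊆ Y → ∃ s ∈ S, s ⊆ X ∧ s ⊆ s' ∧ V (s' \ s) ≤ ε) :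
    sVal V S Y ≤ sVal V S X + ε := by
  refine iSup₂_le fun s' ⟨hs'S, hs'Y⟩ => ?_
  obtain ⟨s, hsS, hsX, hss', hdiff⟩ := h s' hs'S hs'Y
  calc V s' = V (s ∪ s' \ s) := by rw [Set.union_sdiff_cancel hss']
    _ ≤ V s + V (s' \ s) := measure_union_le _ _
    _ ≤ sVal V S X + ε := add_le_add (le_sVal hsS hsX) hdiff

end

theorem sVal_uniformContinuous_of_S_continuous_general {α : Type*} [MeasureSpace α]
    (C : Set α) (S : Set (Set α)) (K : ℝ → Set α)
    (hScont : ∀ ε : ℝ≥0∞, 0 < ε → ∃ δ : ℝ, 0 < δ ∧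
      ∀ t ∈ Set.Icc (0:ℝ) 1, ∀ t' ∈ Set.Icc (0:ℝ) 1, |t' - t| < δ →
        (∀ s' ∈ S, s' ⊆ K t' →
          ∃ s ∈ S, s ⊆ K t ∧ s ⊆ s' ∧ volume (s' \ s) < ε) ∧
        (∀ s' ∈ S, s' ⊆ C \ K t' →
          ∃ s ∈ S, s ⊆ C \ K t ∧ s ⊆ s' ∧ volume (s' \ s) < ε))
    (V : Measure α) [IsFiniteMeasure V] (hac : V ≪ volume) :
    ∀ ε' : ℝ≥0∞, 0 < ε' → ∃ δ : ℝ, 0 < δ ∧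
      ∀ t ∈ Set.Icc (0:ℝ) 1, ∀ t' ∈ Set.Icc (0:ℝ) 1, |t' - t| < δ →
        sVal V S (K t') ≤ sVal V S (K t) + ε' ∧
        sVal V S (C \ K t') ≤ sVal V S (C \ K t) + ε' := by
  intro ε' hε'
  obtain ⟨ε, hε, hεV⟩ := hac.exists_pos_forall_measure_lt hε'
  obtain ⟨δ, hδ, hδS⟩ := hScont ε hε
  refine ⟨δ, hδ, fun t ht t' ht' htt' => ?_⟩
  have approx {X Y : Set α}
      (h : ∀ s' ∈ S, s' ⊆ Y → ∃ s ∈ S, s ⊆ X ∧ s ⊆ s' ∧ volume (s' \ s) < ε) :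
      sVal V S Y ≤ sVal V S X + ε' :=
    sVal_le_sVal_add_of_forall_exists_measure_diff_le fun s' hs' hs'Y =>
      let ⟨s, hs, hsX, hss', hvol⟩ := h s' hs' hs'Y
      ⟨s, hs, hsX, hss', (hεV _ hvol).le⟩
  obtain ⟨hK, hKc⟩ := hδS t ht t' ht' htt'
  exact ⟨approx hK, approx hKc⟩

/-- If the knife function `K` on the cake `C` is `S`-continuous (every `S`-piece contained
in `K(t')` (resp. `C \ K(t')`) has an `ε`-predecessor `S`-piece contained in `K(t)`
(resp. `C \ K(t)`) whenever `|t' - t| < δ`), then for every finite measure `V` absolutely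
continuous w.r.t. Lebesgue measure, `t ↦ V^S(K(t))` and `t ↦ V^S(C \ K(t))` are
uniformly continuous on `[0,1]`. -/
theorem sVal_uniformContinuous_of_S_continuous {α : Type*} [MeasureSpace α]
    (C : Set α) (S : Set (Set α)) (K : ℝ → Set α)
    (hKC : ∀ t ∈ Set.Icc (0:ℝ) 1, K t ⊆ C)
    (hScont : ∀ ε : ℝ≥0∞, 0 < ε → ∃ δ : ℝ, 0 < δ ∧
      ∀ t ∈ Set.Icc (0:ℝ) 1, ∀ t' ∈ Set.Icc (0:ℝ) 1, |t' - t| < δ →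
        (∀ s' ∈ S, s' ⊆ K t' →
          ∃ s ∈ S, s ⊆ K t ∧ s ⊆ s' ∧ volume (s' \ s) < ε) ∧
        (∀ s' ∈ S, s' ⊆ C \ K t' →
          ∃ s ∈ S, s ⊆ C \ K t ∧ s ⊆ s' ∧ volume (s' \ s) < ε))
    (V : Measure α) [IsFiniteMeasure V] (hac : V ≪ volume) :
    ∀ ε' : ℝ≥0∞, 0 < ε' → ∃ δ : ℝ, 0 < δ ∧
      ∀ t ∈ Set.Icc (0:ℝ) 1, ∀ t' ∈ Set.Icc (0:ℝ) 1, |t' - t| < δ →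
        sVal V S (K t') ≤ sVal V S (K t) + ε' ∧
        sVal V S (C \ K t') ≤ sVal V S (C \ K t) + ε' :=
  sVal_uniformContinuous_of_S_continuous_general C S K hScont V hac
end

section
/- A right-angled isosceles triangle in the plane is 2-fat but not R-fat for any R < 2: it contains an axis-parallel square of side L/2 (where L is the leg length) and is contained in a parallel square of side L, and L is the smallest possible side for a containing square parallel to any contained square of maximal size. -/
noncomputable section

/-- Rotation of the plane by angle `θ`. -/
def rot (θ : ℝ) (p : ℝ × ℝ) : ℝ × ℝ :=
  (p.1 * Real.cos θ - p.2 * Real.sin θ, p.1 * Real.sin θ + p.2 * Real.cos θ)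

/-- The square with corner `a`, orientation angle `θ` and side-length `L`. -/
def square (a : ℝ × ℝ) (θ : ℝ) (L : ℝ) : Set (ℝ × ℝ) :=
  (fun p => a + rot θ p) '' Set.Icc (0, 0) (L, L)

/-- A plane piece `P` is `R`-fat if it contains a square `B⁻` and is contained in a
*parallel* square `B⁺` with `len(B⁺)/len(B⁻) ≤ R`. -/
def RFat2 (R : ℝ) (P : Set (ℝ × ℝ)) : Prop :=
  ∃ (a b : ℝ × ℝ) (θ : ℝ) (L₁ L₂ : ℝ), 0 < L₁ ∧
    square a θ L₁ ⊆ P ∧ P ⊆ square b θ L₂ ∧ L₂ / L₁ ≤ R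

/-- The right-angled isosceles triangle with legs of length `L`. -/
def rightIsoscelesTriangle (L : ℝ) : Set (ℝ × ℝ) :=
  {p | 0 ≤ p.1 ∧ 0 ≤ p.2 ∧ p.1 + p.2 ≤ L}

lemma arith_aux (L L₁ L₂ R c s : ℝ) (hL : 0 < L) (hL₁ : 0 < L₁)
    (pyth : c ^ 2 + s ^ 2 = 1)
    (h1 : -L ≤ L₁ * (c + s) + L₁ * (c - s)) (h2 : L₁ * (c + s) + L₁ * (c - s) ≤ L)
    (h3 : -L ≤ L₁ * (c + s) - L₁ * (c - s)) (h4 : L₁ * (c + s) - L₁ * (c - s) ≤ L)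
    (hu : L * |c + s| ≤ L₂) (hv : L * |c - s| ≤ L₂)
    (hratio : L₂ / L₁ ≤ R) (hR : R < 2) : False := by
  have hU0 : (0:ℝ) ≤ |c + s| := abs_nonneg _
  have hV0 : (0:ℝ) ≤ |c - s| := abs_nonneg _
  have hUV : |c + s| ^ 2 + |c - s| ^ 2 = 2 := by
    rw [sq_abs, sq_abs]; nlinarith [pyth]
  have hsum : L₁ * (|c + s| + |c - s|) ≤ L := by
    rcases abs_cases (c + s) with ⟨e1, _⟩ | ⟨e1, _⟩ <;>
      rcases abs_cases (c - s) with ⟨e2, _⟩ | ⟨e2, _⟩ <;> rw [e1, e2] <;> linarith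
  have hM0 : (0:ℝ) ≤ max |c + s| |c - s| := le_trans hU0 (le_max_left _ _)
  have hM : L * max |c + s| |c - s| ≤ L₂ := by
    rcases le_total |c + s| |c - s| with h | h
    · rw [max_eq_right h]; exact hv
    · rw [max_eq_left h]; exact hu
  have h2M : 2 ≤ max |c + s| |c - s| * (|c + s| + |c - s|) := by
    nlinarith [mul_nonneg (sub_nonneg.2 (le_max_left |c + s| |c - s|)) hU0,
      mul_nonneg (sub_nonneg.2 (le_max_right |c + s| |c - s|)) hV0, hUV]
  have t1 := mul_le_mul_of_nonneg_left h2M hL₁.le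
  have t2 := mul_le_mul_of_nonneg_left hsum hM0
  have key : 2 * L₁ ≤ L₂ := by nlinarith [t1, t2, hM]
  have : L₂ < 2 * L₁ := (div_lt_iff₀ hL₁).1 (lt_of_le_of_lt hratio hR)
  linarith

/-- A right-angled isosceles triangle with leg length `L` is 2-fat but not `R`-fat for any
`R < 2`: it contains the axis-parallel square of side `L/2` at its right-angle corner, it
is contained in the parallel square of side `L`, and no `R < 2` can be achieved. -/
theorem rightIsoscelesTriangle_two_fat (L : ℝ) (hL : 0 < L) :
    square (0, 0) 0 (L / 2) ⊆ rightIsoscelesTriangle L ∧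
    rightIsoscelesTriangle L ⊆ square (0, 0) 0 L ∧
    RFat2 2 (rightIsoscelesTriangle L) ∧
    ∀ R : ℝ, R < 2 → ¬ RFat2 R (rightIsoscelesTriangle L) := by
  have hsub1 : square (0, 0) 0 (L / 2) ⊆ rightIsoscelesTriangle L := by
    rintro x ⟨p, hp, rfl⟩
    rw [Set.mem_Icc, Prod.le_def, Prod.le_def] at hp
    obtain ⟨⟨ha1, ha2⟩, hb1, hb2⟩ := hp
    norm_num at ha1 ha2 hb1 hb2
    simp only [rightIsoscelesTriangle, rot, Real.cos_zero, Real.sin_zero, Set.mem_setOf_eq,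
      Prod.fst_add, Prod.snd_add]
    refine ⟨?_, ?_, ?_⟩ <;> norm_num <;> linarith
  have hsub2 : rightIsoscelesTriangle L ⊆ square (0, 0) 0 L := by
    rintro p ⟨hx, hy, hxy⟩
    refine ⟨p, ?_, ?_⟩
    · rw [Set.mem_Icc, Prod.le_def, Prod.le_def]
      exact ⟨⟨hx, hy⟩, by linarith, by linarith⟩
    · simp [rot]
  refine ⟨hsub1, hsub2, ⟨(0, 0), (0, 0), 0, L / 2, L, by linarith, hsub1, hsub2, ?_⟩, ?_⟩
  · have h2 : L / (L / 2) = 2 := by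
      rw [div_eq_iff (by positivity : L / 2 ≠ 0)]
      ring
    rw [h2]
  · rintro R hR ⟨a, b, θ, L₁, L₂, hL₁, hsub, hsup, hratio⟩
    have pyth : Real.cos θ ^ 2 + Real.sin θ ^ 2 = 1 := Real.cos_sq_add_sin_sq θ
    have corner : ∀ p₁ p₂ : ℝ, 0 ≤ p₁ → p₁ ≤ L₁ → 0 ≤ p₂ → p₂ ≤ L₁ →
        0 ≤ a.1 + (p₁ * Real.cos θ - p₂ * Real.sin θ) ∧
        0 ≤ a.2 + (p₁ * Real.sin θ + p₂ * Real.cos θ) ∧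
        (a.1 + (p₁ * Real.cos θ - p₂ * Real.sin θ)) +
          (a.2 + (p₁ * Real.sin θ + p₂ * Real.cos θ)) ≤ L := by
      intro p₁ p₂ hp1 hp2 hp3 hp4
      have hm : (a + rot θ (p₁, p₂)) ∈ rightIsoscelesTriangle L := by
        apply hsub
        exact ⟨(p₁, p₂), by
          rw [Set.mem_Icc, Prod.le_def, Prod.le_def]
          exact ⟨⟨hp1, hp3⟩, hp2, hp4⟩, rfl⟩
      simpa [rightIsoscelesTriangle, rot] using hm
    have C00 := corner 0 0 le_rfl hL₁.le le_rfl hL₁.le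
    have C10 := corner L₁ 0 hL₁.le le_rfl le_rfl hL₁.le
    have C01 := corner 0 L₁ le_rfl hL₁.le hL₁.le le_rfl
    have C11 := corner L₁ L₁ hL₁.le le_rfl hL₁.le le_rfl
    obtain ⟨c00a, c00b, c00c⟩ := C00
    obtain ⟨c10a, c10b, c10c⟩ := C10
    obtain ⟨c01a, c01b, c01c⟩ := C01
    obtain ⟨c11a, c11b, c11c⟩ := C11
    -- vertices of the triangle in the big square
    have v1 : ((L, 0) : ℝ × ℝ) ∈ square b θ L₂ := by
      apply hsup
      refine ⟨hL.le, le_rfl, by norm_num⟩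
    have v2 : ((0, L) : ℝ × ℝ) ∈ square b θ L₂ := by
      apply hsup
      refine ⟨le_rfl, hL.le, by norm_num⟩
    obtain ⟨q, hq, hqe⟩ := v1
    obtain ⟨r, hr, hre⟩ := v2
    rw [Set.mem_Icc, Prod.le_def, Prod.le_def] at hq hr
    obtain ⟨⟨hq1, hq2⟩, hq3, hq4⟩ := hq
    obtain ⟨⟨hr1, hr2⟩, hr3, hr4⟩ := hr
    norm_num at hq1 hq2 hq3 hq4 hr1 hr2 hr3 hr4
    rw [Prod.ext_iff] at hqe hre
    simp only [rot, Prod.fst_add, Prod.snd_add] at hqe hre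
    obtain ⟨hqe1, hqe2⟩ := hqe
    obtain ⟨hre1, hre2⟩ := hre
    have hqr1 : q.1 - r.1 = L * (Real.cos θ - Real.sin θ) := by
      linear_combination Real.cos θ * hqe1 - Real.cos θ * hre1 + Real.sin θ * hqe2 -
        Real.sin θ * hre2 - (q.1 - r.1) * pyth
    have hqr2 : q.2 - r.2 = -(L * (Real.cos θ + Real.sin θ)) := by
      linear_combination -Real.sin θ * hqe1 + Real.sin θ * hre1 + Real.cos θ * hqe2 -
        Real.cos θ * hre2 - (q.2 - r.2) * pyth
    have habs1 : |q.1 - r.1| ≤ L₂ := abs_le.2 ⟨by linarith, by linarith⟩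
    have habs2 : |q.2 - r.2| ≤ L₂ := abs_le.2 ⟨by linarith, by linarith⟩
    have hv : L * |Real.cos θ - Real.sin θ| ≤ L₂ := by
      rw [hqr1, abs_mul, abs_of_pos hL] at habs1; exact habs1
    have hu : L * |Real.cos θ + Real.sin θ| ≤ L₂ := by
      rw [hqr2, abs_neg, abs_mul, abs_of_pos hL] at habs2; exact habs2
    have e1 : -L ≤ L₁ * (Real.cos θ + Real.sin θ) + L₁ * (Real.cos θ - Real.sin θ) := by
      linarith [c11a, c11b, c00c]
    have e2 : L₁ * (Real.cos θ + Real.sin θ) + L₁ * (Real.cos θ - Real.sin θ) ≤ L := by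
      linarith [c11c, c00a, c00b]
    have e3 : -L ≤ L₁ * (Real.cos θ + Real.sin θ) - L₁ * (Real.cos θ - Real.sin θ) := by
      linarith [c01a, c01b, c10c]
    have e4 : L₁ * (Real.cos θ + Real.sin θ) - L₁ * (Real.cos θ - Real.sin θ) ≤ L := by
      linarith [c01c, c10a, c10b]
    exact arith_aux L L₁ L₂ R (Real.cos θ) (Real.sin θ) hL hL₁ pyth e1 e2 e3 e4 hu hv hratio hR
end
end

section
/- Let C be a cake and (K_1,K_2) a 2-knife-tuple on C. Suppose for every (t_1,t_2) with t_2 > 0 there is a knife function K^{t_1,t_2} from ∅ to K_2(t_1,t_2). Define K_1'(t_1,t_2,t_3) := K_1(t_1, t_2+t_3); K_2'(t_1,t_2,t_3) := K^{t_1,t_2+t_3}(t_2/(t_2+t_3)) if t_2+t_3>0, else ∅; K_3'(t_1,t_2,t_3) := K_2(t_1,t_2+t_3) \ K_2'(t_1,t_2,t_3) if t_2+t_3>0, else ∅. Then (K_1',K_2',K_3') is a 3-knife-tuple on C. -/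
/-- From a 2-knife-tuple `(K₁, K₂)` on `C` and, for every `(t₁,t₂)` with `t₂ > 0`, a
monotone knife function `Kf t₁ t₂` from `∅` to `K₂ t₁ t₂`, the triple
`K₁'(t₁,t₂,t₃) := K₁(t₁, t₂+t₃)`,
`K₂'(t₁,t₂,t₃) := Kf t₁ (t₂+t₃) (t₂/(t₂+t₃))` (and `∅` if `t₂+t₃ = 0`),
`K₃'(t₁,t₂,t₃) := K₂(t₁, t₂+t₃) \ K₂'(t₁,t₂,t₃)` (and `∅` if `t₂+t₃ = 0`)
is a 3-knife-tuple on `C`: at every point of the unit simplex the three pieces are pairwise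
disjoint with union `C`, and a piece whose coordinate vanishes is empty. -/
theorem three_knife_tuple_of_two {α : Type*} (C : Set α) (K₁ K₂ : ℝ → ℝ → Set α)
    (h2a : K₁ 1 0 = C) (h2b : K₂ 0 1 = C) (h2c : K₁ 0 1 = ∅) (h2d : K₂ 1 0 = ∅)
    (h2e : ∀ t₁ ∈ Set.Icc (0:ℝ) 1,
      K₁ t₁ (1 - t₁) ∪ K₂ t₁ (1 - t₁) = C ∧ Disjoint (K₁ t₁ (1 - t₁)) (K₂ t₁ (1 - t₁)))
    (Kf : ℝ → ℝ → ℝ → Set α)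
    (hKf0 : ∀ t₁ t₂ : ℝ, 0 < t₂ → Kf t₁ t₂ 0 = ∅)
    (hKf1 : ∀ t₁ t₂ : ℝ, 0 < t₂ → Kf t₁ t₂ 1 = K₂ t₁ t₂)
    (hKfmono : ∀ t₁ t₂ : ℝ, 0 < t₂ → ∀ s s' : ℝ, s ≤ s' → Kf t₁ t₂ s ⊆ Kf t₁ t₂ s')
    (hKfsub : ∀ t₁ t₂ : ℝ, 0 < t₂ → ∀ s ∈ Set.Icc (0:ℝ) 1, Kf t₁ t₂ s ⊆ K₂ t₁ t₂) :
    let K₁' : ℝ → ℝ → ℝ → Set α := fun t₁ t₂ t₃ => K₁ t₁ (t₂ + t₃)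
    let K₂' : ℝ → ℝ → ℝ → Set α := fun t₁ t₂ t₃ =>
      if 0 < t₂ + t₃ then Kf t₁ (t₂ + t₃) (t₂ / (t₂ + t₃)) else ∅
    let K₃' : ℝ → ℝ → ℝ → Set α := fun t₁ t₂ t₃ =>
      if 0 < t₂ + t₃ then K₂ t₁ (t₂ + t₃) \ Kf t₁ (t₂ + t₃) (t₂ / (t₂ + t₃)) else ∅
    ∀ t₁ t₂ t₃ : ℝ, 0 ≤ t₁ → 0 ≤ t₂ → 0 ≤ t₃ → t₁ + t₂ + t₃ = 1 →
      (K₁' t₁ t₂ t₃ ∪ K₂' t₁ t₂ t₃ ∪ K₃' t₁ t₂ t₃ = C) ∧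
      Disjoint (K₁' t₁ t₂ t₃) (K₂' t₁ t₂ t₃) ∧
      Disjoint (K₁' t₁ t₂ t₃) (K₃' t₁ t₂ t₃) ∧
      Disjoint (K₂' t₁ t₂ t₃) (K₃' t₁ t₂ t₃) ∧
      (t₁ = 0 → K₁' t₁ t₂ t₃ = ∅) ∧
      (t₂ = 0 → K₂' t₁ t₂ t₃ = ∅) ∧
      (t₃ = 0 → K₃' t₁ t₂ t₃ = ∅) := by
  intro K₁' K₂' K₃' t₁ t₂ t₃ h1 h2 h3 hsum
  simp only [K₁', K₂', K₃']
  rcases eq_or_lt_of_le (add_nonneg h2 h3) with hs | hs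
  · -- t₂ + t₃ = 0
    have ht2 : t₂ = 0 := by linarith
    have ht3 : t₃ = 0 := by linarith
    have ht1 : t₁ = 1 := by linarith
    simp [← hs, ht1, ht2, ht3, h2a]
  · have hif : (0 : ℝ) < t₂ + t₃ := hs
    have ht1 : t₁ + (t₂ + t₃) = 1 := by linarith
    have ht1' : t₂ + t₃ = 1 - t₁ := by linarith
    have ht1m : t₁ ∈ Set.Icc (0:ℝ) 1 := ⟨h1, by linarith⟩
    obtain ⟨hunion, hdisj⟩ := h2e t₁ ht1m
    rw [← ht1'] at hunion hdisj
    have hdivm : t₂ / (t₂ + t₃) ∈ Set.Icc (0:ℝ) 1 :=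
      ⟨div_nonneg h2 (le_of_lt hs), by
        rw [div_le_one hs]; linarith⟩
    have hsubK : Kf t₁ (t₂ + t₃) (t₂ / (t₂ + t₃)) ⊆ K₂ t₁ (t₂ + t₃) :=
      hKfsub t₁ (t₂ + t₃) hs _ hdivm
    simp only [if_pos hif]
    refine ⟨?_, ?_, ?_, ?_, ?_, ?_, ?_⟩
    · rw [Set.union_assoc, Set.union_diff_cancel hsubK, hunion]
    · exact hdisj.mono_right hsubK
    · exact hdisj.mono_right (Set.diff_subset.trans (le_refl _))
    · exact Set.disjoint_sdiff_right.symm.symm |>.symm |>.symm |>.mono_left (le_refl _) |>.symm.symm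
    · intro h; subst h
      rw [show t₂ + t₃ = 1 by linarith, h2c]
    · intro h; subst h
      rw [zero_div, hKf0 t₁ _ hs]
    · intro h; subst h
      rw [add_zero] at hs ⊢
      rw [div_self (ne_of_gt hs), hKf1 t₁ _ hs, Set.diff_self]
end

section
/- There exist a compact cake C ⊂ R² (a square with water pools), a family S (squares contained in C) and two finite absolutely continuous value measures V_1, V_2 such that in every S-allocation (X_1, X_2) of disjoint square pieces of C, min_i V_i(X_i)/V_i(C) ≤ 1/4. Concretely: let C = [0,1]², let V_1 = V_2 = V be uniform on four tiny discs of equal measure centered near the four corners of C; then any two disjoint squares inside C can together touch at most 5 of the 8 'agent-disc' shares needed, and in fact at least one agent's square contains at most one disc, giving value at most 1/4 + o(1). -/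
/-!
Both agents value the uniform measure on four boxes of side `ε = 1/10` in the corners of
`C = [0,1]²`. An agent who gets more than a quarter meets two different boxes, so holds two points
at distance `≥ 1 - 2ε` in the sup metric of `ℝ × ℝ` (whose closed balls are axis-parallel
squares). Both coordinate projections of a square of side `L` and angle `θ` have length
`w = L (|cos θ| + |sin θ|)`; for a square inside `C` this forces `w ≥ 1 - 2ε`, so its centre lies
within `ε` of `(1/2, 1/2)`. The square contains the ball of radius `L/4 ≥ w/8` about its centre,
hence contains `(1/2, 1/2)`, and two such squares cannot be disjoint.
-/

open MeasureTheory
open scoped ENNReal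

noncomputable section

/-- The family of all squares (of positive side) in the plane. -/
def Squares : Set (Set (ℝ × ℝ)) := {s | ∃ a θ L, 0 < L ∧ s = square a θ L}

open Metric Real

theorem rot_add (θ : ℝ) (u v : ℝ × ℝ) : rot θ (u + v) = rot θ u + rot θ v := by
  ext <;> simp only [rot, Prod.fst_add, Prod.snd_add] <;> ring

theorem rot_rot_neg (θ : ℝ) (u : ℝ × ℝ) : rot θ (rot (-θ) u) = u := by
  ext <;> simp only [rot, cos_neg, sin_neg]
  · linear_combination u.1 * sin_sq_add_cos_sq θ
  · linear_combination u.2 * sin_sq_add_cos_sq θ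

theorem norm_rot_le (θ : ℝ) (v : ℝ × ℝ) : ‖rot θ v‖ ≤ (|cos θ| + |sin θ|) * ‖v‖ := by
  have h₁ : |v.1| ≤ ‖v‖ := norm_fst_le v
  have h₂ : |v.2| ≤ ‖v‖ := norm_snd_le v
  have hc := abs_nonneg (cos θ)
  have hs := abs_nonneg (sin θ)
  refine norm_prod_le_iff.2 ⟨?_, ?_⟩ <;> simp only [rot, Real.norm_eq_abs]
  · calc |v.1 * cos θ - v.2 * sin θ| ≤ |v.1| * |cos θ| + |v.2| * |sin θ| := by
          simpa only [abs_mul] using abs_sub (v.1 * cos θ) (v.2 * sin θ)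
      _ ≤ (|cos θ| + |sin θ|) * ‖v‖ := by nlinarith
  · calc |v.1 * sin θ + v.2 * cos θ| ≤ |v.1| * |sin θ| + |v.2| * |cos θ| := by
          simpa only [abs_mul] using abs_add_le (v.1 * sin θ) (v.2 * cos θ)
      _ ≤ (|cos θ| + |sin θ|) * ‖v‖ := by nlinarith

theorem abs_cos_add_abs_sin_le_two (θ : ℝ) : |cos θ| + |sin θ| ≤ 2 := by
  linarith [abs_cos_le_one θ, abs_sin_le_one θ]

def squareCenter (a : ℝ × ℝ) (θ L : ℝ) : ℝ × ℝ := a + rot θ (L / 2, L / 2)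

theorem mem_Icc_iff_norm_sub_le {L : ℝ} {p : ℝ × ℝ} :
    p ∈ Set.Icc (0, 0) (L, L) ↔ ‖p - (L / 2, L / 2)‖ ≤ L / 2 := by
  simp only [norm_prod_le_iff, Set.mem_Icc, Prod.le_def, Prod.fst_sub, Prod.snd_sub,
    Real.norm_eq_abs, abs_le]
  constructor <;> intro h <;> refine ⟨⟨?_, ?_⟩, ?_, ?_⟩ <;> linarith [h.1.1, h.1.2, h.2.1, h.2.2]

theorem square_eq_image_closedBall (a : ℝ × ℝ) (θ L : ℝ) :
    square a θ L = (fun v => squareCenter a θ L + rot θ v) '' closedBall 0 (L / 2) := by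
  ext z
  simp only [square, squareCenter, Set.mem_image, mem_closedBall, dist_zero_right]
  constructor
  · rintro ⟨p, hp, rfl⟩
    refine ⟨p - (L / 2, L / 2), mem_Icc_iff_norm_sub_le.1 hp, ?_⟩
    rw [add_assoc, ← rot_add, add_sub_cancel]
  · rintro ⟨v, hv, rfl⟩
    refine ⟨v + (L / 2, L / 2), mem_Icc_iff_norm_sub_le.2 (by rwa [add_sub_cancel_right]), ?_⟩
    rw [add_assoc, ← rot_add, add_comm v]

theorem exists_abs_le_mul_eq_abs_mul (α : ℝ) {r : ℝ} (hr : 0 ≤ r) :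
    ∃ x : ℝ, |x| ≤ r ∧ α * x = |α| * r := by
  rcases le_total 0 α with hα | hα
  · exact ⟨r, (abs_of_nonneg hr).le, by rw [abs_of_nonneg hα]⟩
  · exact ⟨-r, by rw [abs_neg, abs_of_nonneg hr], by rw [abs_of_nonpos hα]; ring⟩

theorem exists_abs_add_mul_add_mul_eq (t α β : ℝ) {r : ℝ} (hr : 0 ≤ r) :
    ∃ x y : ℝ, |x| ≤ r ∧ |y| ≤ r ∧ |t + (α * x + β * y)| = |t| + (|α| + |β|) * r := by
  obtain ⟨x, hx, hαx⟩ := exists_abs_le_mul_eq_abs_mul α hr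
  obtain ⟨y, hy, hβy⟩ := exists_abs_le_mul_eq_abs_mul β hr
  have hk : 0 ≤ (|α| + |β|) * r := by positivity
  rcases le_total 0 t with ht | ht
  · refine ⟨x, y, hx, hy, ?_⟩
    rw [hαx, hβy, abs_of_nonneg ht, abs_of_nonneg (by linarith)]
    ring
  · refine ⟨-x, -y, by rwa [abs_neg], by rwa [abs_neg], ?_⟩
    rw [mul_neg, mul_neg, hαx, hβy, abs_of_nonpos ht, abs_of_nonpos (by linarith)]
    ring

section Square

variable {a : ℝ × ℝ} {θ L : ℝ}

theorem squareCenter_add_rot_mem_square {v : ℝ × ℝ} (hv : ‖v‖ ≤ L / 2) :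
    squareCenter a θ L + rot θ v ∈ square a θ L := by
  rw [square_eq_image_closedBall]
  exact ⟨v, mem_closedBall_zero_iff.2 hv, rfl⟩

theorem square_subset_closedBall_squareCenter :
    square a θ L ⊆ closedBall (squareCenter a θ L) (L * (|cos θ| + |sin θ|) / 2) := by
  rw [square_eq_image_closedBall]
  rintro _ ⟨v, hv, rfl⟩
  rw [mem_closedBall_zero_iff] at hv
  rw [mem_closedBall, dist_eq_norm, add_sub_cancel_left]
  calc ‖rot θ v‖ ≤ (|cos θ| + |sin θ|) * ‖v‖ := norm_rot_le θ v
    _ ≤ (|cos θ| + |sin θ|) * (L / 2) := by gcongr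
    _ = L * (|cos θ| + |sin θ|) / 2 := by ring

theorem closedBall_squareCenter_subset_square :
    closedBall (squareCenter a θ L) (L / 4) ⊆ square a θ L := by
  intro z hz
  rw [mem_closedBall, dist_eq_norm] at hz
  have hv : ‖rot (-θ) (z - squareCenter a θ L)‖ ≤ L / 2 :=
    calc ‖rot (-θ) (z - squareCenter a θ L)‖
        ≤ (|cos (-θ)| + |sin (-θ)|) * ‖z - squareCenter a θ L‖ := norm_rot_le _ _
      _ ≤ 2 * (L / 4) := mul_le_mul (abs_cos_add_abs_sin_le_two _) hz (norm_nonneg _) zero_le_two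
      _ = L / 2 := by ring
  simpa only [rot_rot_neg, add_sub_cancel] using
    squareCenter_add_rot_mem_square (a := a) (θ := θ) hv

theorem dist_squareCenter_add_le {z : ℝ × ℝ} {R : ℝ} (hS : square a θ L ⊆ closedBall z R)
    (hL : 0 ≤ L) : dist (squareCenter a θ L) z + L * (|cos θ| + |sin θ|) / 2 ≤ R := by
  set m := squareCenter a θ L
  have hfar : ∀ x y : ℝ, |x| ≤ L / 2 → |y| ≤ L / 2 → dist (m + rot θ (x, y)) z ≤ R :=
    fun x y hx hy => hS (squareCenter_add_rot_mem_square (norm_prod_le_iff.2 ⟨hx, hy⟩))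
  rw [Prod.dist_eq, max_add, max_le_iff]
  constructor
  · obtain ⟨x, y, hx, hy, hxy⟩ :=
      exists_abs_add_mul_add_mul_eq (m.1 - z.1) (cos θ) (-sin θ) (by positivity : (0 : ℝ) ≤ L / 2)
    calc dist m.1 z.1 + L * (|cos θ| + |sin θ|) / 2
        = |m.1 - z.1 + (cos θ * x + -sin θ * y)| := by rw [hxy, abs_neg, Real.dist_eq]; ring
      _ = dist (m + rot θ (x, y)).1 z.1 := by
          rw [Real.dist_eq]; simp only [rot, Prod.fst_add]; ring_nf
      _ ≤ dist (m + rot θ (x, y)) z := by rw [Prod.dist_eq]; exact le_max_left _ _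
      _ ≤ R := hfar x y hx hy
  · obtain ⟨x, y, hx, hy, hxy⟩ :=
      exists_abs_add_mul_add_mul_eq (m.2 - z.2) (sin θ) (cos θ) (by positivity : (0 : ℝ) ≤ L / 2)
    calc dist m.2 z.2 + L * (|cos θ| + |sin θ|) / 2
        = |m.2 - z.2 + (sin θ * x + cos θ * y)| := by rw [hxy, Real.dist_eq]; ring
      _ = dist (m + rot θ (x, y)).2 z.2 := by
          rw [Real.dist_eq]; simp only [rot, Prod.snd_add]; ring_nf
      _ ≤ dist (m + rot θ (x, y)) z := by rw [Prod.dist_eq]; exact le_max_right _ _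
      _ ≤ R := hfar x y hx hy

end Square

theorem mem_square_of_subset_closedBall_of_le_dist {a : ℝ × ℝ} {θ L : ℝ} {z p q : ℝ × ℝ}
    {r δ : ℝ} (hS : square a θ L ⊆ closedBall z r) (hp : p ∈ square a θ L)
    (hq : q ∈ square a θ L) (hpq : 2 * (r - δ) ≤ dist p q) (hδ : 5 * δ ≤ r) :
    z ∈ square a θ L := by
  set w := L * (|cos θ| + |sin θ|)
  have hL : 0 ≤ L := by
    rw [square_eq_image_closedBall] at hp
    obtain ⟨v, hv, -⟩ := hp
    linarith [norm_nonneg v, mem_closedBall_zero_iff.1 hv]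
  have hw : dist p q ≤ w := by
    have hpm := square_subset_closedBall_squareCenter hp
    have hqm := square_subset_closedBall_squareCenter hq
    rw [mem_closedBall] at hpm hqm
    linarith [dist_triangle_right p q (squareCenter a θ L)]
  have hwL : w ≤ 2 * L := by
    nlinarith [abs_cos_add_abs_sin_le_two θ]
  have hm := dist_squareCenter_add_le hS hL
  apply closedBall_squareCenter_subset_square
  rw [mem_closedBall, dist_comm]
  linarith

def cornerCoord (ε : ℝ) (b : Bool) : ℝ := if b then 1 - ε / 2 else ε / 2

/-- The box of side `ε` in the corner of `[0,1]²` selected by `σ`; the four boxes stand in for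
the paper's small discs. -/
def cornerBox (ε : ℝ) (σ : Bool × Bool) : Set (ℝ × ℝ) :=
  closedBall (cornerCoord ε σ.1, cornerCoord ε σ.2) (ε / 2)

theorem one_sub_le_abs_cornerCoord_sub {ε : ℝ} {b b' : Bool} (h : b ≠ b') :
    1 - ε ≤ |cornerCoord ε b - cornerCoord ε b'| := by
  cases b <;> cases b' <;> simp only [ne_eq, not_true_eq_false, reduceCtorEq] at h <;>
    simp only [cornerCoord, if_true, Bool.false_eq_true, if_false] <;>
    [exact le_abs.2 (Or.inr (by linarith)); exact le_abs.2 (Or.inl (by linarith))]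

theorem abs_cornerCoord_sub_half {ε : ℝ} (hε : ε ≤ 1) (b : Bool) :
    |cornerCoord ε b - 1 / 2| = (1 - ε) / 2 := by
  cases b <;> simp only [cornerCoord, if_true, Bool.false_eq_true, if_false]
  · rw [abs_of_nonpos (by linarith)]; ring
  · rw [abs_of_nonneg (by linarith)]; ring

theorem one_sub_two_mul_le_dist_of_mem_cornerBox {ε : ℝ} {σ τ : Bool × Bool} {p q : ℝ × ℝ}
    (hστ : σ ≠ τ) (hp : p ∈ cornerBox ε σ) (hq : q ∈ cornerBox ε τ) :
    1 - 2 * ε ≤ dist p q := by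
  have hcenters : 1 - ε ≤ dist (cornerCoord ε σ.1, cornerCoord ε σ.2)
      (cornerCoord ε τ.1, cornerCoord ε τ.2) := by
    rw [Prod.dist_eq, Real.dist_eq, Real.dist_eq]
    rcases not_and_or.1 (fun h => hστ (Prod.ext h.1 h.2)) with h | h
    · exact le_max_of_le_left (one_sub_le_abs_cornerCoord_sub h)
    · exact le_max_of_le_right (one_sub_le_abs_cornerCoord_sub h)
  rw [cornerBox, mem_closedBall] at hp hq
  linarith [dist_triangle4 (cornerCoord ε σ.1, cornerCoord ε σ.2) p q
    (cornerCoord ε τ.1, cornerCoord ε τ.2), dist_comm p (cornerCoord ε σ.1, cornerCoord ε σ.2)]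

theorem Icc_zero_one_eq_closedBall :
    Set.Icc ((0 : ℝ), (0 : ℝ)) (1, 1) = closedBall ((1 / 2 : ℝ), (1 / 2 : ℝ)) (1 / 2) := by
  rw [← closedBall_prod_same, Real.closedBall_eq_Icc, Set.Icc_prod_Icc]
  norm_num

theorem cornerBox_subset_closedBall {ε : ℝ} (hε : ε ≤ 1) (σ : Bool × Bool) :
    cornerBox ε σ ⊆ closedBall ((1 / 2 : ℝ), (1 / 2 : ℝ)) (1 / 2) := by
  refine closedBall_subset_closedBall' ?_
  rw [Prod.dist_eq, Real.dist_eq, Real.dist_eq, abs_cornerCoord_sub_half hε,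
    abs_cornerCoord_sub_half hε, max_self]
  ring_nf; rfl

theorem volume_cornerBox (ε : ℝ) (σ : Bool × Bool) :
    volume (cornerBox ε σ) = ENNReal.ofReal ε ^ 2 := by
  rw [cornerBox, ← closedBall_prod_same, Measure.volume_eq_prod, Measure.prod_prod,
    Real.volume_closedBall, Real.volume_closedBall, mul_div_cancel₀ ε two_ne_zero, sq]

def cornerMeasure (ε : ℝ) : Measure (ℝ × ℝ) := ∑ σ : Bool × Bool, volume.restrict (cornerBox ε σ)

theorem cornerMeasure_apply (ε : ℝ) (X : Set (ℝ × ℝ)) :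
    cornerMeasure ε X = ∑ σ, volume (X ∩ cornerBox ε σ) := by
  simp only [cornerMeasure, Measure.finsetSum_apply,
    Measure.restrict_apply' measurableSet_closedBall, cornerBox]

instance (ε : ℝ) : IsFiniteMeasure (cornerMeasure ε) :=
  ⟨by
    rw [cornerMeasure_apply]
    exact ENNReal.sum_lt_top.2 fun σ _ =>
      (measure_mono Set.inter_subset_right).trans_lt (isCompact_closedBall _ _).measure_lt_top⟩

theorem cornerMeasure_absolutelyContinuous (ε : ℝ) : cornerMeasure ε ≪ volume := fun s hs => by
  rw [cornerMeasure_apply]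
  exact Finset.sum_eq_zero fun σ _ => measure_mono_null Set.inter_subset_left hs

theorem cornerMeasure_closedBall {ε : ℝ} (hε : ε ≤ 1) :
    cornerMeasure ε (closedBall ((1 / 2 : ℝ), (1 / 2 : ℝ)) (1 / 2)) = 4 * ENNReal.ofReal ε ^ 2 := by
  simp only [cornerMeasure_apply, Set.inter_eq_right.2 (cornerBox_subset_closedBall hε _),
    volume_cornerBox, Finset.sum_const, Finset.card_univ, Fintype.card_prod, Fintype.card_bool,
    nsmul_eq_mul]
  norm_num

theorem exists_ne_of_lt_cornerMeasure {ε : ℝ} {X : Set (ℝ × ℝ)}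
    (h : ENNReal.ofReal ε ^ 2 < cornerMeasure ε X) :
    ∃ σ τ, σ ≠ τ ∧ (X ∩ cornerBox ε σ).Nonempty ∧ (X ∩ cornerBox ε τ).Nonempty := by
  by_contra! hX
  obtain ⟨σ, hσ⟩ | hempty := em (∃ σ, (X ∩ cornerBox ε σ).Nonempty)
  · refine h.not_ge ?_
    rw [cornerMeasure_apply, Finset.sum_eq_single σ]
    · exact (measure_mono Set.inter_subset_right).trans (volume_cornerBox ε σ).le
    · intro τ _ hτσ
      rw [Set.not_nonempty_iff_eq_empty.1 fun hτ => hσ.ne_empty (hX τ σ hτσ hτ), measure_empty]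
    · exact fun hσ' => (hσ' (Finset.mem_univ σ)).elim
  · simp only [not_exists, Set.not_nonempty_iff_eq_empty] at hempty
    simp [cornerMeasure_apply, hempty] at h

theorem center_mem_square_of_lt_cornerMeasure {ε : ℝ} (hε : ε ≤ 1 / 10) {a : ℝ × ℝ} {θ L : ℝ}
    (hS : square a θ L ⊆ closedBall ((1 / 2 : ℝ), (1 / 2 : ℝ)) (1 / 2))
    (h : ENNReal.ofReal ε ^ 2 < cornerMeasure ε (square a θ L)) :
    ((1 / 2 : ℝ), (1 / 2 : ℝ)) ∈ square a θ L := by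
  obtain ⟨σ, τ, hστ, ⟨p, hpS, hp⟩, ⟨q, hqS, hq⟩⟩ := exists_ne_of_lt_cornerMeasure h
  exact mem_square_of_subset_closedBall_of_le_dist (δ := ε) hS hpS hqS
    (by linarith [one_sub_two_mul_le_dist_of_mem_cornerBox hστ hp hq]) (by linarith)

/-- There is a compact square cake `C = [0,1]²` and finite absolutely continuous value
measures `V₁, V₂` (uniform on tiny discs near the four corners) such that every allocation
of two disjoint square pieces of `C` gives some agent at most `1/4` of their total value:
`Prop(Square, 2, Squares) ≤ 1/4`. -/
theorem square_cake_two_agents_upper_bound :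
    ∃ C : Set (ℝ × ℝ), IsCompact C ∧ C = Set.Icc ((0 : ℝ), (0 : ℝ)) (1, 1) ∧
      ∃ V₁ V₂ : Measure (ℝ × ℝ),
        IsFiniteMeasure V₁ ∧ IsFiniteMeasure V₂ ∧
        V₁ ≪ volume ∧ V₂ ≪ volume ∧ V₁ C ≠ 0 ∧ V₂ C ≠ 0 ∧
        ∀ X₁ X₂ : Set (ℝ × ℝ), X₁ ∈ Squares → X₂ ∈ Squares →
          X₁ ⊆ C → X₂ ⊆ C → Disjoint X₁ X₂ →
          min (V₁ X₁ / V₁ C) (V₂ X₂ / V₂ C) ≤ 1 / 4 := by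
  set V := cornerMeasure (1 / 10)
  have hVC : V (Set.Icc (0, 0) (1, 1)) = 4 * ENNReal.ofReal (1 / 10) ^ 2 := by
    rw [Icc_zero_one_eq_closedBall, cornerMeasure_closedBall (by norm_num)]
  have hVC₀ : V (Set.Icc (0, 0) (1, 1)) ≠ 0 := by rw [hVC]; exact mul_ne_zero (by norm_num) (pow_ne_zero 2 (by norm_num))
  have hcenter : ∀ X ∈ Squares, X ⊆ Set.Icc (0, 0) (1, 1) →
      1 / 4 < V X / V (Set.Icc (0, 0) (1, 1)) → ((1 / 2 : ℝ), (1 / 2 : ℝ)) ∈ X := by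
    rintro _ ⟨a, θ, L, -, rfl⟩ hXC hX
    rw [ENNReal.lt_div_iff_mul_lt (Or.inl hVC₀) (Or.inr (by norm_num)), hVC, ← mul_assoc,
      ENNReal.div_mul_cancel (by norm_num) (by norm_num), one_mul] at hX
    rw [Icc_zero_one_eq_closedBall] at hXC
    exact center_mem_square_of_lt_cornerMeasure (by norm_num) hXC hX
  refine ⟨_, isCompact_Icc, rfl, V, V, inferInstance, inferInstance,
    cornerMeasure_absolutelyContinuous _, cornerMeasure_absolutelyContinuous _, hVC₀, hVC₀, ?_⟩
  intro X₁ X₂ hX₁ hX₂ hX₁C hX₂C hdisj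
  by_contra! h
  rw [lt_min_iff] at h
  exact hdisj.ne_of_mem (hcenter X₁ hX₁ hX₁C h.1) (hcenter X₂ hX₂ hX₂C h.2) rfl
end
end

section
/- For every R ≥ 1, every d ≥ 1 and every n ≥ 2, there is an (R+1)-fat cake C ⊂ R^d such that no partition of C into n pieces, each m'R-fat for some m' ≤ (n−1)^{1/d}, gives every agent value exactly 1/n of the total, for suitably chosen identical value measures. Concretely: let C be the union of a unit cube (containing n−1+ε units of value, uniformly) and an attached box of length R and thickness δ with a pool of 1−ε units of value at its far end; for δ small enough, any piece overlapping both value regions must be contained-cube of side ≤ max(δ, (1/(n−1+ε))^{1/d}) while its smallest containing cube has side ≥ R, so it is not m'R-fat. -/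
open MeasureTheory
open scoped ENNReal

noncomputable section

/-- The axis-parallel cube in `ℝ^d` with lower corner `a` and side-length `L`. -/
def axisCube {d : ℕ} (a : Fin d → ℝ) (L : ℝ) : Set (EuclideanSpace ℝ (Fin d)) :=
  {x | ∀ i, a i ≤ x i ∧ x i ≤ a i + L}

/-- A `d`-dimensional piece `P` is `R`-fat if it contains a cube `B⁻` and is contained in a
*parallel* cube `B⁺` with `len(B⁺)/len(B⁻) ≤ R` (cubes in arbitrary common orientation,
given by an isometry of `ℝ^d`). -/
def RFat {d : ℕ} (R : ℝ) (P : Set (EuclideanSpace ℝ (Fin d))) : Prop :=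
  ∃ (f : EuclideanSpace ℝ (Fin d) ≃ᵢ EuclideanSpace ℝ (Fin d))
    (a b : Fin d → ℝ) (L₁ L₂ : ℝ), 0 < L₁ ∧
      f '' axisCube a L₁ ⊆ P ∧ P ⊆ f '' axisCube b L₂ ∧ L₂ / L₁ ≤ R

/-!
The cake is the unit cube together with `k = 2n` tiny cubes ("clusters") of side `η`, strung
along the diagonal near the opposite corner `(R+1, …, R+1)` and spaced `Δ` apart in every
coordinate; the value is Lebesgue measure on the clusters. A proportional piece carries the
value of two clusters, so it meets two of them; fatness then gives it an inner cube too large to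
fit into the clusters, so that cube reaches into the unit cube and the piece stretches over a
distance close to `R`. Fatness now forces an inner cube of volume close to
`R^d / (m'R)^d ≥ 1/(n-1)`, and `n` disjoint such cubes do not fit into the cake.
-/

open Set Filter Topology Function

section AxisCube

variable {d : ℕ}

lemma axisCube_eq_preimage (a : Fin d → ℝ) (L : ℝ) :
    axisCube a L = WithLp.ofLp ⁻¹' univ.pi fun i => Icc (a i) (a i + L) := by
  ext x
  simp only [axisCube, mem_ofPred_eq, mem_preimage, mem_univ_pi, mem_Icc]

lemma measurableSet_axisCube (a : Fin d → ℝ) (L : ℝ) : MeasurableSet (axisCube a L) := by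
  rw [axisCube_eq_preimage]
  exact measurableSet_preimage (PiLp.volume_preserving_ofLp _).measurable
    (.univ_pi fun _ => measurableSet_Icc)

lemma volume_axisCube (a : Fin d → ℝ) {L : ℝ} (hL : 0 ≤ L) :
    volume (axisCube a L) = ENNReal.ofReal (L ^ d) := by
  rw [axisCube_eq_preimage, (PiLp.volume_preserving_ofLp _).measure_preimage
    (MeasurableSet.univ_pi fun _ => measurableSet_Icc).nullMeasurableSet, volume_pi_pi]
  simp [Real.volume_Icc, ENNReal.ofReal_pow hL]

lemma volume_image_isometryEquiv (f : EuclideanSpace ℝ (Fin d) ≃ᵢ EuclideanSpace ℝ (Fin d))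
    (s : Set (EuclideanSpace ℝ (Fin d))) : volume (f '' s) = volume s := by
  rw [← EuclideanSpace.euclideanHausdorffMeasure_eq_volume,
    f.isometry.euclideanHausdorffMeasure_image]

lemma measurableSet_image_isometryEquiv
    (f : EuclideanSpace ℝ (Fin d) ≃ᵢ EuclideanSpace ℝ (Fin d))
    {s : Set (EuclideanSpace ℝ (Fin d))} (hs : MeasurableSet s) : MeasurableSet (f '' s) :=
  f.toHomeomorph.measurableEmbedding.measurableSet_image.2 hs

/-- Comparing `dist x y` with the side `L` loses a factor `√d` on both sides, which cancels. -/
lemma le_of_forall_le_sub_of_mem_image_axisCube (hd : d ≠ 0)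
    (f : EuclideanSpace ℝ (Fin d) ≃ᵢ EuclideanSpace ℝ (Fin d)) {b : Fin d → ℝ} {L c : ℝ}
    {x y : EuclideanSpace ℝ (Fin d)} (hx : x ∈ f '' axisCube b L) (hy : y ∈ f '' axisCube b L)
    (hc : 0 ≤ c) (hxy : ∀ i, c ≤ x i - y i) : c ≤ L := by
  obtain ⟨x, hx, rfl⟩ := hx
  obtain ⟨y, hy, rfl⟩ := hy
  have hL : 0 ≤ L := by linarith [hx ⟨0, Nat.pos_of_ne_zero hd⟩]
  have hsq : (d : ℝ) * c ^ 2 ≤ d * L ^ 2 := calc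
    (d : ℝ) * c ^ 2 = ∑ _i : Fin d, c ^ 2 := by simp
    _ ≤ ∑ i, dist (f x i) (f y i) ^ 2 := by
      gcongr with i
      exact (hxy i).trans (le_abs_self _)
    _ = ∑ i, dist (x i) (y i) ^ 2 := by
      rw [← EuclideanSpace.dist_sq_eq, ← EuclideanSpace.dist_sq_eq, f.dist_eq]
    _ ≤ ∑ _i : Fin d, L ^ 2 := by
      gcongr with i
      rw [Real.dist_eq, abs_le]
      constructor <;> linarith [hx i, hy i]
    _ = d * L ^ 2 := by simp
  exact le_of_pow_le_pow_left₀ two_ne_zero hL (le_of_mul_le_mul_left hsq (by positivity))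

end AxisCube

lemma card_mul_le_measure_of_pairwise_disjoint {α ι : Type*} [MeasurableSpace α] [Fintype ι]
    {μ : Measure α} {K : ι → Set α} {s : Set α} {c : ℝ≥0∞} (hdisj : Pairwise (Disjoint on K))
    (hK : ∀ i, MeasurableSet (K i)) (hKs : ∀ i, K i ⊆ s) (hc : ∀ i, c ≤ μ (K i)) :
    Fintype.card ι * c ≤ μ s := calc
  Fintype.card ι * c = ∑ _i : ι, c := by simp
  _ ≤ ∑ i, μ (K i) := Finset.sum_le_sum fun i _ => hc i
  _ = μ (⋃ i, K i) :=
    ((measure_iUnion hdisj hK).trans (tsum_fintype (L := .unconditional _) _)).symm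
  _ ≤ μ s := measure_mono (iUnion_subset hKs)

section SlimCake

variable {d : ℕ} {R Δ η : ℝ}

def cluster (R Δ η : ℝ) (j : ℕ) : Set (EuclideanSpace ℝ (Fin d)) :=
  axisCube (fun _ => R + 1 - (j + 1) * Δ) η

def clusters (k : ℕ) (R Δ η : ℝ) : Set (EuclideanSpace ℝ (Fin d)) :=
  ⋃ j : Fin k, cluster R Δ η j

def slimCake (k : ℕ) (R Δ η : ℝ) : Set (EuclideanSpace ℝ (Fin d)) :=
  axisCube 0 1 ∪ clusters k R Δ η

lemma le_sub_of_mem_cluster_of_lt (hΔ : 0 ≤ Δ) {j j' : ℕ} (hj : j < j')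
    {x y : EuclideanSpace ℝ (Fin d)} (hx : x ∈ cluster R Δ η j) (hy : y ∈ cluster R Δ η j')
    (i : Fin d) : Δ - η ≤ x i - y i := by
  have hjj' : (j : ℝ) + 1 ≤ j' := by exact_mod_cast hj
  nlinarith [(hx i).1, (hy i).2]

lemma le_sub_of_mem_cluster_of_mem_unitCube (hΔ : 0 ≤ Δ) {k j : ℕ} (hj : j < k)
    {x y : EuclideanSpace ℝ (Fin d)} (hx : x ∈ cluster R Δ η j) (hy : y ∈ axisCube 0 1)
    (i : Fin d) : R - k * Δ ≤ x i - y i := by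
  have hjk : (j : ℝ) + 1 ≤ k := by exact_mod_cast hj
  have hyi := hy i
  simp only [Pi.zero_apply, zero_add] at hyi
  nlinarith [(hx i).1]

lemma disjoint_cluster (hd : d ≠ 0) (hηΔ : η < Δ) {j j' : ℕ} (hjj' : j ≠ j') :
    Disjoint (cluster R Δ η j : Set (EuclideanSpace ℝ (Fin d))) (cluster R Δ η j') := by
  wlog hj : j < j' generalizing j j'
  · exact (this hjj'.symm (hjj'.lt_or_gt.resolve_left hj)).symm
  refine disjoint_left.2 fun x hx hx' => ?_
  have i : Fin d := ⟨0, Nat.pos_of_ne_zero hd⟩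
  linarith [le_sub_of_mem_cluster_of_lt (by linarith [hx i]) hj hx hx' i]

lemma volume_cluster (hη : 0 ≤ η) (j : ℕ) :
    volume (cluster R Δ η j : Set (EuclideanSpace ℝ (Fin d))) = ENNReal.ofReal (η ^ d) :=
  volume_axisCube _ hη

lemma measurableSet_clusters (k : ℕ) :
    MeasurableSet (clusters k R Δ η : Set (EuclideanSpace ℝ (Fin d))) :=
  .iUnion fun _ => measurableSet_axisCube _ _

lemma volume_clusters (hd : d ≠ 0) (hη : 0 ≤ η) (hηΔ : η < Δ) (k : ℕ) :
    volume (clusters k R Δ η : Set (EuclideanSpace ℝ (Fin d))) = k * ENNReal.ofReal (η ^ d) := by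
  rw [clusters, measure_iUnion (fun j j' h => disjoint_cluster hd hηΔ (Fin.val_ne_of_ne h))
    fun _ => measurableSet_axisCube _ _]
  simp [volume_cluster hη]

lemma volume_slimCake_le (hd : d ≠ 0) (hη : 0 ≤ η) (hηΔ : η < Δ) (k : ℕ) :
    volume (slimCake k R Δ η : Set (EuclideanSpace ℝ (Fin d))) ≤
      ENNReal.ofReal (1 + k * η ^ d) := by
  refine (measure_union_le _ _).trans_eq ?_
  rw [volume_axisCube _ zero_le_one, volume_clusters hd hη hηΔ, one_pow,
    ENNReal.ofReal_add zero_le_one (by positivity), ENNReal.ofReal_mul (by positivity),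
    ENNReal.ofReal_natCast]

lemma clusters_subset_slimCake (k : ℕ) :
    (clusters k R Δ η : Set (EuclideanSpace ℝ (Fin d))) ⊆ slimCake k R Δ η :=
  subset_union_right

lemma volume_restrict_clusters_slimCake (hd : d ≠ 0) (hη : 0 ≤ η) (hηΔ : η < Δ) (k : ℕ) :
    volume.restrict (clusters k R Δ η) (slimCake k R Δ η : Set (EuclideanSpace ℝ (Fin d))) =
      k * ENNReal.ofReal (η ^ d) := by
  rw [Measure.restrict_apply' (measurableSet_clusters k),
    inter_eq_right.2 (clusters_subset_slimCake k), volume_clusters hd hη hηΔ]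

lemma clusters_subset_axisCube (hη : 0 ≤ η) (hηΔ : η ≤ Δ) {k : ℕ} (hk : k * Δ ≤ R + 1) :
    (clusters k R Δ η : Set (EuclideanSpace ℝ (Fin d))) ⊆ axisCube 0 (R + 1) := by
  intro x hx
  obtain ⟨j, hx⟩ := mem_iUnion.1 hx
  have hjk : (j : ℝ) + 1 ≤ k := by exact_mod_cast j.isLt
  intro i
  simp only [Pi.zero_apply, zero_add]
  constructor <;> nlinarith [hx i]

lemma rFat_slimCake (hR : 0 ≤ R) (hη : 0 ≤ η) (hηΔ : η ≤ Δ) {k : ℕ} (hk : k * Δ ≤ R + 1) :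
    RFat (R + 1) (slimCake k R Δ η : Set (EuclideanSpace ℝ (Fin d))) := by
  refine ⟨IsometryEquiv.refl _, 0, 0, 1, R + 1, one_pos, ?_, ?_, by rw [div_one]⟩
  · exact (image_id _).subset.trans subset_union_left
  · refine (image_id _).symm ▸ union_subset (fun x hx i => ?_) (clusters_subset_axisCube hη hηΔ hk)
    have hxi := hx i
    simp only [Pi.zero_apply, zero_add] at hxi ⊢
    constructor <;> linarith

lemma exists_mem_cluster_of_lt_volume (hη : 0 ≤ η) {k : ℕ} {X : Set (EuclideanSpace ℝ (Fin d))}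
    (hX : ENNReal.ofReal (η ^ d) < volume (X ∩ clusters k R Δ η)) :
    ∃ j j' : Fin k, j < j' ∧ (X ∩ cluster R Δ η j).Nonempty ∧
      (X ∩ cluster R Δ η j').Nonempty := by
  obtain ⟨p, hpX, hp⟩ := nonempty_of_measure_ne_zero (pos_of_gt hX).ne'
  obtain ⟨j, hpj⟩ := mem_iUnion.1 hp
  have hnot : ¬ X ∩ clusters k R Δ η ⊆ cluster R Δ η j := fun h =>
    ((measure_mono h).trans_eq (volume_cluster hη j)).not_gt hX
  obtain ⟨q, ⟨hqX, hq⟩, hqj⟩ := not_subset.1 hnot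
  obtain ⟨j', hqj'⟩ := mem_iUnion.1 hq
  have hjj' : j ≠ j' := by
    rintro rfl
    exact hqj hqj'
  rcases hjj'.lt_or_gt with h | h
  · exact ⟨j, j', h, ⟨p, hpX, hpj⟩, ⟨q, hqX, hqj'⟩⟩
  · exact ⟨j', j, h, ⟨q, hqX, hqj'⟩, ⟨p, hpX, hpj⟩⟩

lemma exists_large_cube_of_rFat (hd : d ≠ 0) (hη : 0 ≤ η) (hηΔ : η < Δ) {k : ℕ}
    (hkΔ : k * Δ ≤ R) {r : ℝ} (hr : 0 < r) (hsep : k * η ^ d < ((Δ - η) / r) ^ d)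
    {X : Set (EuclideanSpace ℝ (Fin d))} (hX : RFat r X) (hXC : X ⊆ slimCake k R Δ η)
    {j j' : Fin k} (hj : j < j') (hXj : (X ∩ cluster R Δ η j).Nonempty)
    (hXj' : (X ∩ cluster R Δ η j').Nonempty) :
    ∃ K ⊆ X, MeasurableSet K ∧ ENNReal.ofReal (((R - k * Δ) / r) ^ d) ≤ volume K := by
  obtain ⟨f, a, b, L₁, L₂, hL₁, hKX, hXB, hratio⟩ := hX
  have hside : ∀ {c : ℝ}, 0 ≤ c → ∀ x ∈ X, ∀ y ∈ X, (∀ i, c ≤ x i - y i) → c / r ≤ L₁ :=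
    fun hc x hx y hy hxy => (div_le_iff₀ hr).2 <|
      (le_of_forall_le_sub_of_mem_image_axisCube hd f (hXB hx) (hXB hy) hc hxy).trans <|
        (div_le_iff₀ hL₁).1 hratio |>.trans_eq (mul_comm _ _)
  obtain ⟨p, hpX, hpj⟩ := hXj
  obtain ⟨q, hqX, hqj'⟩ := hXj'
  have hvolK : volume (f '' axisCube a L₁) = ENNReal.ofReal (L₁ ^ d) := by
    rw [volume_image_isometryEquiv, volume_axisCube _ hL₁.le]
  -- Spanning two clusters makes the inner cube too large to lie inside the clusters.
  obtain ⟨z, hzK, hzU⟩ : ∃ z ∈ f '' axisCube a L₁, z ∈ axisCube 0 1 := by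
    by_contra! h
    have hKA : f '' axisCube a L₁ ⊆ clusters k R Δ η := fun z hz =>
      (hXC (hKX hz)).resolve_left (h z hz)
    have hle := measure_mono (μ := volume) hKA
    rw [hvolK, volume_clusters hd hη hηΔ, ← ENNReal.ofReal_natCast,
      ← ENNReal.ofReal_mul (Nat.cast_nonneg _), ENNReal.ofReal_le_ofReal_iff (by positivity)] at hle
    have hL : (Δ - η) / r ≤ L₁ := hside (by linarith) p hpX q hqX
      (le_sub_of_mem_cluster_of_lt (by linarith) hj hpj hqj')
    linarith [pow_le_pow_left₀ (by positivity) hL d]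
  refine ⟨_, hKX, measurableSet_image_isometryEquiv f (measurableSet_axisCube _ _), ?_⟩
  rw [hvolK]
  have hR : 0 ≤ R - k * Δ := by linarith
  gcongr
  exact hside hR p hpX z (hKX hzK)
    (le_sub_of_mem_cluster_of_mem_unitCube (by linarith) j.isLt hpj hzU)

lemma exists_large_cube_of_fair (hd : d ≠ 0) (hη : 0 < η) (hηΔ : η < Δ) {n : ℕ} (hn : n ≠ 0)
    (hkΔ : (2 * n : ℕ) * Δ ≤ R) {r : ℝ} (hr : 0 < r)
    (hsep : (2 * n : ℕ) * η ^ d < ((Δ - η) / r) ^ d) {X : Set (EuclideanSpace ℝ (Fin d))}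
    (hX : RFat r X) (hXC : X ⊆ slimCake (2 * n) R Δ η)
    (hfair : volume.restrict (clusters (2 * n) R Δ η) X = volume.restrict (clusters (2 * n) R Δ η)
      (slimCake (2 * n) R Δ η : Set (EuclideanSpace ℝ (Fin d))) / n) :
    ∃ K ⊆ X, MeasurableSet K ∧
      ENNReal.ofReal (((R - (2 * n : ℕ) * Δ) / r) ^ d) ≤ volume K := by
  have hV : ENNReal.ofReal (η ^ d) < volume (X ∩ clusters (2 * n) R Δ η) := by
    rw [← Measure.restrict_apply' (measurableSet_clusters _), hfair,
      volume_restrict_clusters_slimCake hd hη.le hηΔ, Nat.cast_mul, Nat.cast_ofNat,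
      mul_right_comm, ENNReal.mul_div_cancel_right (by simpa using hn) (by simp), two_mul]
    exact ENNReal.lt_add_right ENNReal.ofReal_ne_top (by simp [hη])
  obtain ⟨j, j', hj, hXj, hXj'⟩ := exists_mem_cluster_of_lt_volume hη.le hV
  exact exists_large_cube_of_rFat hd hη.le hηΔ hkΔ hr hsep hX hXC hj hXj hXj'

end SlimCake

lemma exists_small_pos_of_lt {d : ℕ} (hd : d ≠ 0) {a b c e R : ℝ} (hR : 0 < R)
    (h : a < b * R ^ d) : ∃ η > 0, c * η < R ∧ a * (1 + e * η ^ d) < b * (R - c * η) ^ d := by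
  have h0 : ∀ᶠ η in 𝓝 (0 : ℝ), c * η < R ∧ a * (1 + e * η ^ d) < b * (R - c * η) ^ d :=
    (ContinuousAt.eventually_lt (by fun_prop) (by fun_prop) (by simpa using hR)).and
      (ContinuousAt.eventually_lt (by fun_prop) (by fun_prop) (by simpa [hd] using h))
  obtain ⟨η, hη, hη0⟩ := ((h0.filter_mono nhdsWithin_le_nhds).and
    (eventually_mem_nhdsWithin (s := Ioi 0))).exists
  exact ⟨η, hη0, hη⟩

/-- The gap `Δ - η` between clusters is a fixed multiple `κ` of their side `η`, with `κ` so
large that a cube spanning two clusters outweighs all of them; `η` is then taken so small that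
`R - kΔ` is close enough to `R` for `N` cubes of side `(R - kΔ) / r` to overflow the unit cube. -/
lemma exists_slimCake_params {d : ℕ} (hd : d ≠ 0) (k : ℕ) {s N R : ℝ} (hs : 0 ≤ s)
    (hsN : s < N) (hR : 0 < R) :
    ∃ η Δ : ℝ, 0 < η ∧ η < Δ ∧ k * Δ ≤ R ∧ ∀ r : ℝ, 0 < r → r ^ d ≤ s * R ^ d →
      k * η ^ d < ((Δ - η) / r) ^ d ∧ 1 + k * η ^ d < N * ((R - k * Δ) / r) ^ d := by
  set κ : ℝ := k * s * R ^ d + 1 with hκ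
  have hκ1 : 1 ≤ κ := by
    have : 0 ≤ (k : ℝ) * s * R ^ d := by positivity
    linarith
  obtain ⟨η, hη, hkΔ, hbudget⟩ := exists_small_pos_of_lt hd (c := k * (κ + 1)) (e := k)
    (a := s * R ^ d) (b := N) hR (by nlinarith [pow_pos hR d])
  set Δ := (κ + 1) * η
  rw [show (k : ℝ) * (κ + 1) * η = k * Δ from mul_assoc _ _ _] at hkΔ hbudget
  refine ⟨η, Δ, hη, by nlinarith, hkΔ.le, fun r hr hrd => ⟨?_, ?_⟩⟩
  · rw [show Δ - η = κ * η by ring, div_pow, lt_div_iff₀ (by positivity), mul_pow κ η]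
    have : 0 < η ^ d := by positivity
    calc k * η ^ d * r ^ d ≤ k * η ^ d * (s * R ^ d) := by gcongr
      _ < κ * η ^ d := by rw [hκ]; nlinarith
      _ ≤ κ ^ d * η ^ d := by gcongr; exact le_self_pow₀ hκ1 hd
  · rw [div_pow, mul_div_assoc', lt_div_iff₀ (by positivity)]
    calc (1 + k * η ^ d) * r ^ d ≤ (1 + k * η ^ d) * (s * R ^ d) := by gcongr
      _ < N * (R - k * Δ) ^ d := by linarith

/-- For every `R ≥ 1`, `d ≥ 1` and `n ≥ 2` there are an `(R+1)`-fat cake `C ⊆ ℝ^d` and a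
finite absolutely continuous value measure `V` (identical for all agents) such that no
allocation of `n` pairwise-disjoint pieces of `C`, each `m'R`-fat for some
`m' ≤ (n−1)^(1/d)`, gives every agent exactly `1/n` of the total value. -/
theorem proportional_needs_slim_pieces {d n : ℕ} (hd : 1 ≤ d) (hn : 2 ≤ n)
    (R : ℝ) (hR : 1 ≤ R) :
    ∃ (C : Set (EuclideanSpace ℝ (Fin d))) (V : Measure (EuclideanSpace ℝ (Fin d))),
      RFat (R + 1) C ∧ IsFiniteMeasure V ∧ V ≪ volume ∧ V C ≠ 0 ∧
      ∀ m' : ℝ, 0 < m' → m' ≤ ((n : ℝ) - 1) ^ ((1 : ℝ) / d) →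
        ∀ X : Fin n → Set (EuclideanSpace ℝ (Fin d)),
          (∀ i j, i ≠ j → Disjoint (X i) (X j)) →
          (⋃ i, X i) ⊆ C →
          (∀ i, RFat (m' * R) (X i)) →
          ¬ (∀ i, V (X i) = V C / (n : ℝ≥0∞)) := by
  have hd0 : d ≠ 0 := by omega
  have hR0 : 0 < R := by linarith
  have hn1 : (0 : ℝ) ≤ n - 1 := by
    rw [sub_nonneg]
    exact_mod_cast (by omega : 1 ≤ n)
  obtain ⟨η, Δ, hη, hηΔ, hkΔ, hparams⟩ :=
    exists_slimCake_params hd0 (2 * n) (s := n - 1) (N := n) hn1 (by linarith) hR0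
  refine ⟨slimCake (2 * n) R Δ η, volume.restrict (clusters (2 * n) R Δ η),
    rFat_slimCake hR0.le hη.le hηΔ.le (by linarith),
    isFiniteMeasure_restrict.2 (by rw [volume_clusters hd0 hη.le hηΔ]; finiteness),
    Measure.absolutelyContinuous_of_le Measure.restrict_le_self,
    by simp [volume_restrict_clusters_slimCake hd0 hη.le hηΔ, hη]; omega, ?_⟩
  intro m' hm' hm'le X hdisj hXC hfat hfair
  have hr : 0 < m' * R := by positivity
  have hrd : (m' * R) ^ d ≤ (n - 1) * R ^ d := by
    rw [mul_pow, ← Real.rpow_inv_natCast_pow hn1 hd0, ← one_div]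
    gcongr
  obtain ⟨hsep, hbudget⟩ := hparams _ hr hrd
  choose K hKX hKm hK using fun i => exists_large_cube_of_fair hd0 hη hηΔ (by omega) hkΔ hr hsep
    (hfat i) ((subset_iUnion X i).trans hXC) (hfair i)
  have htotal := (card_mul_le_measure_of_pairwise_disjoint
    (fun i j h => (hdisj i j h).mono (hKX i) (hKX j)) hKm
    (fun i => (hKX i).trans ((subset_iUnion X i).trans hXC)) hK).trans
    (volume_slimCake_le hd0 hη.le hηΔ _)
  rw [Fintype.card_fin, ← ENNReal.ofReal_natCast, ← ENNReal.ofReal_mul (by positivity),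
    ENNReal.ofReal_le_ofReal_iff (by positivity)] at htotal
  linarith
end
end
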